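/- For m = 2, the general inclusion of Proposition XX holds: if A has terms t_0, t_1, t_2 with t_0(x,y,z)=x, t_0(x,x,y)=t_1(x,y,y), t_1(x,x,y)=t_2(x,y,y), t_2(x,y,z)=z, and R_0, R_1, R_2 are relations on A, S_1, S_2, T_1, T_2 are reflexive relations on A, then R_0 ∩ (S_1 ∘ (R_1 ∩ (S_2 ∘ R_2 ∘ T_2)) ∘ T_1) ⊆ R_0 ∩ (S'_1 ∘ (R'_1 ∩ (S'_2 ∘ R_2 ∘ T'_2)) ∘ T'_1), where R'_1 is the least compatible relation containing R_0 ∪ R_1 ∪ R_2, S'_1 and T'_1 are the least compatible relations containing S_2 and T_2 respectively, and S'_2, T'_2 those containing S_1 and T_1 respectively. -/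

import Mathlib

/-! The end conditions `t₀ = pr₁` and `t₂ = pr₃` turn the chain into Mal'cev identities for `t₁`:
`t₁ x y y = x` and `t₁ x x y = y`. Given a witness `a S₁ c R₁ d T₁ b` with `c S₂ e R₂ f T₂ d`,
replace the middle points `c, d` by `t₁ a c e` and `t₁ b d f`. Applying `t₁` coordinatewise to
`(a, b)`, `(c, d)`, `(e, f)` relates them by the compatible closure of `R₀ ∪ R₁ ∪ R₂`, and each of
the four outer steps is one application of `t₁` to a single given pair padded by reflexive ones,
which moves it into the compatible closure of the relation on the other level. -/

/-- A binary relation `R` is compatible with the algebra given by `ops`. -/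
def Compatible {A ι : Type*} {ar : ι → ℕ} (ops : ∀ i : ι, (Fin (ar i) → A) → A)
    (R : A → A → Prop) : Prop :=
  ∀ i (f g : Fin (ar i) → A), (∀ k, R (f k) (g k)) → R (ops i f) (ops i g)

/-- The least compatible relation containing `X`. -/
def Bar {A ι : Type*} {ar : ι → ℕ} (ops : ∀ i : ι, (Fin (ar i) → A) → A)
    (X : A → A → Prop) : A → A → Prop :=
  fun a b => ∀ R : A → A → Prop, Compatible ops R → (∀ x y, X x y → R x y) → R a b

/-- A ternary operation preserving a binary relation. -/
def PreservesRel {A : Type*} (t : A → A → A → A) (θ : A → A → Prop) : Prop :=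
  ∀ a a' b b' c c', θ a a' → θ b b' → θ c c' → θ (t a b c) (t a' b' c')

section Bar

variable {A ι : Type*} {ar : ι → ℕ} (ops : ∀ i : ι, (Fin (ar i) → A) → A)

lemma Bar.compatible (X : A → A → Prop) : Compatible ops (Bar ops X) :=
  fun i f g h _ hR hX => hR i f g fun k => h k _ hR hX

lemma Bar.of_rel {X : A → A → Prop} {x y : A} (h : X x y) : Bar ops X x y :=
  fun _ _ hX => hX _ _ h

lemma Bar.refl {X : A → A → Prop} (hX : ∀ a, X a a) (a : A) : Bar ops X a a :=
  Bar.of_rel ops (hX a)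

end Bar

structure IsMalcev {A : Type*} (t : A → A → A → A) : Prop where
  left : ∀ x y, t x y y = x
  right : ∀ x y, t x x y = y

lemma IsMalcev.of_chain {A : Type*} {t₀ t₁ t₂ : A → A → A → A}
    (h0 : ∀ x y z, t₀ x y z = x) (h01 : ∀ x y, t₀ x x y = t₁ x y y)
    (h12 : ∀ x y, t₁ x x y = t₂ x y y) (h2 : ∀ x y z, t₂ x y z = z) : IsMalcev t₁ where
  left x y := (h01 x y).symm.trans (h0 x x y)
  right x y := (h12 x y).trans (h2 x y y)

namespace PreservesRel

variable {A : Type*} {t : A → A → A → A} {θ : A → A → Prop}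
  (ht : PreservesRel t θ) (hm : IsMalcev t) (hθ : ∀ a, θ a a)
include ht hm hθ

lemma left_rel_malcev {x y z : A} (h : θ y z) : θ x (t x y z) := by
  simpa only [hm.left] using ht x x y y y z (hθ x) (hθ y) h

lemma malcev_rel_left {x y z : A} (h : θ z y) : θ (t x y z) x := by
  simpa only [hm.left] using ht x x y y z y (hθ x) (hθ y) h

lemma malcev_rel_right {x y z : A} (h : θ x y) : θ (t x y z) z := by
  simpa only [hm.right] using ht x y y y z z h (hθ y) (hθ z)

lemma right_rel_malcev {x y z : A} (h : θ y x) : θ z (t x y z) := by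
  simpa only [hm.right] using ht y x y y z z h (hθ y) (hθ z)

end PreservesRel

/-- Proposition XX for m = 2:
R₀ ∩ (S₁ ∘ (R₁ ∩ (S₂ ∘ R₂ ∘ T₂)) ∘ T₁) ⊆ R₀ ∩ (S'₁ ∘ (R'₁ ∩ (S'₂ ∘ R₂ ∘ T'₂)) ∘ T'₁). -/
theorem stmt4 {A ι : Type*} {ar : ι → ℕ} (ops : ∀ i : ι, (Fin (ar i) → A) → A)
    (t₀ t₁ t₂ : A → A → A → A)
    (h0 : ∀ x y z, t₀ x y z = x)
    (h01 : ∀ x y, t₀ x x y = t₁ x y y)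
    (h12 : ∀ x y, t₁ x x y = t₂ x y y)
    (h2 : ∀ x y z, t₂ x y z = z)
    (hterm : ∀ t ∈ ([t₀, t₁, t₂] : List (A → A → A → A)),
      ∀ R : A → A → Prop, Compatible ops R → PreservesRel t R)
    (R₀ R₁ R₂ S₁ S₂ T₁ T₂ : A → A → Prop)
    (hS₁ : ∀ a, S₁ a a) (hS₂ : ∀ a, S₂ a a) (hT₁ : ∀ a, T₁ a a) (hT₂ : ∀ a, T₂ a a) :
    ∀ a b : A,
      (R₀ a b ∧ Relation.Comp (Relation.Comp S₁
        (fun x y => R₁ x y ∧ Relation.Comp (Relation.Comp S₂ R₂) T₂ x y)) T₁ a b) →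
      (R₀ a b ∧ Relation.Comp (Relation.Comp (Bar ops S₂)
        (fun x y => Bar ops (fun u v => R₀ u v ∨ R₁ u v ∨ R₂ u v) x y ∧
          Relation.Comp (Relation.Comp (Bar ops S₁) R₂) (Bar ops T₁) x y))
        (Bar ops T₂) a b) := by
  have hm : IsMalcev t₁ := .of_chain h0 h01 h12 h2
  have ht : ∀ X, PreservesRel t₁ (Bar ops X) := fun X =>
    hterm t₁ (by simp) _ (Bar.compatible ops X)
  rintro a b ⟨hab, d, ⟨c, hac, hcd, f, ⟨e, hce, hef⟩, hfd⟩, hdb⟩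
  refine ⟨hab, t₁ b d f, ⟨t₁ a c e, ?_, ?_, f, ⟨e, ?_, hef⟩, ?_⟩, ?_⟩
  · exact (ht S₂).left_rel_malcev hm (Bar.refl ops hS₂) (Bar.of_rel ops hce)
  · exact ht _ a b c d e f (Bar.of_rel ops (.inl hab)) (Bar.of_rel ops (.inr (.inl hcd)))
      (Bar.of_rel ops (.inr (.inr hef)))
  · exact (ht S₁).malcev_rel_right hm (Bar.refl ops hS₁) (Bar.of_rel ops hac)
  · exact (ht T₁).right_rel_malcev hm (Bar.refl ops hT₁) (Bar.of_rel ops hdb)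
  · exact (ht T₂).malcev_rel_left hm (Bar.refl ops hT₂) (Bar.of_rel ops hfd)
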